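/- arXiv:2407.02971 — 11 statements merged into one kernel-verified Lean document; each statement's English description precedes it below -/
import Mathlib

section
/- Let (X,ρ) be a symmetric rack, S = {S_x}_{x∈X} a family of sets, and suppose given maps α_{x,y}: S_x × S_y → S_{x*y} for all x,y ∈ X and β_x: S_x → S_{ρ(x)} for all x ∈ X. Then the set X × S = {(x,s) : x ∈ X, s ∈ S_x} with the binary operation (x,s)*(y,t) = (x*y, α_{x,y}(s,t)) is a rack and the map ρ_{α,β}(x,s) = (ρ(x), β_x(s)) is a good involution on it if and only if (α,β) is a dynamical cocycle of (X,ρ) over S, i.e. conditions (1)–(5) hold. -/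
/-- A binary operation is a rack operation: right self-distributive and
all right translations are bijective. -/
def IsRackOp {Y : Type*} (m : Y → Y → Y) : Prop :=
  (∀ a b c, m (m a b) c = m (m a c) (m b c)) ∧ ∀ b, Function.Bijective (fun a => m a b)

/-- `r` is a good involution on the rack `(Y, m)`:
`r∘r = id`, `r(a*b) = r(a)*b` and `a*r(b) = a*⁻¹b` (the latter encoded as
`(a*r(b))*b = a`). -/
def IsGoodInv {Y : Type*} (m : Y → Y → Y) (r : Y → Y) : Prop :=
  (∀ a, r (r a) = a) ∧ (∀ a b, r (m a b) = m (r a) b) ∧ (∀ a b, m (m a (r b)) b = a)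

/-- The binary operation on `X × S = {(x,s) : x ∈ X, s ∈ S x}`:
`(x,s)*(y,t) = (x*y, α x y s t)`. -/
def extOp {X : Type*} (op : X → X → X) (S : X → Type*)
    (α : ∀ x y, S x → S y → S (op x y)) : Sigma S → Sigma S → Sigma S :=
  fun p q => ⟨op p.1 q.1, α p.1 q.1 p.2 q.2⟩

/-- The involution `ρ_{α,β}(x,s) = (ρ x, β x s)` on `X × S`. -/
def extRho {X : Type*} (rho : X → X) (S : X → Type*)
    (β : ∀ x, S x → S (rho x)) : Sigma S → Sigma S :=
  fun p => ⟨rho p.1, β p.1 p.2⟩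

/-- Conditions (1)–(5) for `(α, β)` to be a dynamical cocycle of the symmetric rack
`(X, op, rho)` over the family of sets `S`. -/
def DynCocycle {X : Type*} (op : X → X → X) (rho : X → X) (S : X → Type*)
    (α : ∀ x y, S x → S y → S (op x y)) (β : ∀ x, S x → S (rho x)) : Prop :=
  (∀ (x y : X) (t : S y), Function.Bijective (fun s : S x => α x y s t)) ∧
  (∀ (x y z : X) (s : S x) (t : S y) (w : S z),
    (⟨op (op x y) z, α (op x y) z (α x y s t) w⟩ : Sigma S)
      = ⟨op (op x z) (op y z), α (op x z) (op y z) (α x z s w) (α y z t w)⟩) ∧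
  (∀ (x y : X) (s : S x) (t : S y),
    (⟨op (rho x) y, α (rho x) y (β x s) t⟩ : Sigma S)
      = ⟨rho (op x y), β (op x y) (α x y s t)⟩) ∧
  (∀ (x : X) (s : S x), (⟨rho (rho x), β (rho x) (β x s)⟩ : Sigma S) = ⟨x, s⟩) ∧
  (∀ (x y : X) (s : S x) (t : S y),
    (⟨op (op x (rho y)) y, α (op x (rho y)) y (α x (rho y) s (β y t)) t⟩ : Sigma S) = ⟨x, s⟩)

/-- for a symmetric rack `(X, ρ)`, the set `X × S` with the operation
`(x,s)*(y,t) = (x*y, α x y s t)` is a rack with good involution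
`ρ_{α,β}(x,s) = (ρ x, β x s)` if and only if `(α,β)` is a dynamical cocycle. -/
theorem statement0 {X : Type*} (op : X → X → X) (rho : X → X)
    (hrack : IsRackOp op) (hinv : IsGoodInv op rho)
    (S : X → Type*) (α : ∀ x y, S x → S y → S (op x y)) (β : ∀ x, S x → S (rho x)) :
    (IsRackOp (extOp op S α) ∧ IsGoodInv (extOp op S α) (extRho rho S β))
      ↔ DynCocycle op rho S α β := by
  obtain ⟨hdist, hbij⟩ := hrack
  constructor
  · rintro ⟨⟨Fdist, Fbij⟩, Finv1, Finv2, Finv3⟩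
    refine ⟨?_, ?_, ?_, ?_, ?_⟩
    · intro x y t
      constructor
      · intro s s' h
        have h2 : extOp op S α ⟨x, s⟩ ⟨y, t⟩ = extOp op S α ⟨x, s'⟩ ⟨y, t⟩ := by
          simp only [extOp, h]
        have := (Fbij ⟨y, t⟩).1 h2
        simpa using this
      · intro u
        obtain ⟨p, hp⟩ := (Fbij ⟨y, t⟩).2 ⟨op x y, u⟩
        obtain ⟨x', s⟩ := p
        have h1 : op x' y = op x y := congrArg Sigma.fst hp
        have hx : x' = x := (hbij y).1 h1
        subst hx
        exact ⟨s, by simpa [extOp] using hp⟩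
    · intro x y z s t w; exact Fdist ⟨x, s⟩ ⟨y, t⟩ ⟨z, w⟩
    · intro x y s t; exact (Finv2 ⟨x, s⟩ ⟨y, t⟩).symm
    · intro x s; exact Finv1 ⟨x, s⟩
    · intro x y s t; exact Finv3 ⟨x, s⟩ ⟨y, t⟩
  · rintro ⟨c1, c2, c3, c4, c5⟩
    have Fdist : ∀ p q w : Sigma S, extOp op S α (extOp op S α p q) w
        = extOp op S α (extOp op S α p w) (extOp op S α q w) := by
      rintro ⟨x, s⟩ ⟨y, t⟩ ⟨z, w⟩; exact c2 x y z s t w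
    have Finv1 : ∀ p, extRho rho S β (extRho rho S β p) = p := by
      rintro ⟨x, s⟩; exact c4 x s
    have Finv2 : ∀ p q, extRho rho S β (extOp op S α p q)
        = extOp op S α (extRho rho S β p) q := by
      rintro ⟨x, s⟩ ⟨y, t⟩; exact (c3 x y s t).symm
    have Finv3 : ∀ p q, extOp op S α (extOp op S α p (extRho rho S β q)) q = p := by
      rintro ⟨x, s⟩ ⟨y, t⟩; exact c5 x y s t
    refine ⟨⟨Fdist, ?_⟩, Finv1, Finv2, Finv3⟩
    intro q
    have hleft : ∀ p, extOp op S α (extOp op S α p q) (extRho rho S β q) = p := by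
      intro p
      have := Finv3 p (extRho rho S β q)
      rwa [Finv1 q] at this
    exact Function.bijective_iff_has_inverse.2
      ⟨fun p => extOp op S α p (extRho rho S β q), hleft, fun p => Finv3 p q⟩
end

section
/- Let (X,ρ) be a symmetric quandle, S = {S_x}_{x∈X} a family of sets, and suppose given maps α_{x,y}: S_x × S_y → S_{x*y} for all x,y ∈ X and β_x: S_x → S_{ρ(x)} for all x ∈ X. Then the set X × S = {(x,s) : x ∈ X, s ∈ S_x} with the binary operation (x,s)*(y,t) = (x*y, α_{x,y}(s,t)) is a quandle and the map ρ_{α,β}(x,s) = (ρ(x), β_x(s)) is a good involution on it if and only if (α,β) satisfies the dynamical cocycle conditions (1)–(5) together with (6) α_{x,x}(s,s) = s for all x ∈ X, s ∈ S_x. -/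
/-- A quandle operation: a rack operation which is idempotent. -/
def IsQuandleOp {Y : Type*} (m : Y → Y → Y) : Prop :=
  IsRackOp m ∧ ∀ a, m a a = a

/-- Condition (6): `α x x s s = s` for all `x, s`. -/
def Cond6 {X : Type*} (op : X → X → X) (S : X → Type*)
    (α : ∀ x y, S x → S y → S (op x y)) : Prop :=
  ∀ (x : X) (s : S x), (⟨op x x, α x x s s⟩ : Sigma S) = ⟨x, s⟩

/-- for a symmetric quandle `(X, ρ)`, the set `X × S` with the operation
`(x,s)*(y,t) = (x*y, α x y s t)` is a quandle with good involution
`ρ_{α,β}(x,s) = (ρ x, β x s)` if and only if `(α,β)` satisfies the dynamical cocycle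
conditions (1)–(5) together with (6). -/
theorem statement1 {X : Type*} (op : X → X → X) (rho : X → X)
    (hq : IsQuandleOp op) (hinv : IsGoodInv op rho)
    (S : X → Type*) (α : ∀ x y, S x → S y → S (op x y)) (β : ∀ x, S x → S (rho x)) :
    (IsQuandleOp (extOp op S α) ∧ IsGoodInv (extOp op S α) (extRho rho S β))
      ↔ (DynCocycle op rho S α β ∧ Cond6 op S α) := by

  obtain ⟨⟨hsd, hbij⟩, hidem⟩ := hq
  constructor
  · rintro ⟨⟨⟨esd, ebij⟩, eidem⟩, er2, erm, emr⟩
    refine ⟨⟨?_, ?_, ?_, ?_, ?_⟩, ?_⟩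
    · intro x y t
      constructor
      · intro s s' h
        have h2 : extOp op S α ⟨x, s⟩ ⟨y, t⟩ = extOp op S α ⟨x, s'⟩ ⟨y, t⟩ :=
          congrArg (fun u => (⟨op x y, u⟩ : Sigma S)) h
        have h3 := (ebij ⟨y, t⟩).1 h2
        exact eq_of_heq (Sigma.mk.inj_iff.mp h3).2
      · intro u
        obtain ⟨⟨a, s⟩, h⟩ := (ebij ⟨y, t⟩).2 ⟨op x y, u⟩
        have h1 : op a y = op x y := congrArg Sigma.fst h
        have ha : a = x := (hbij y).1 h1
        subst ha
        exact ⟨s, eq_of_heq (Sigma.mk.inj_iff.mp h).2⟩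
    · intro x y z s t w; exact esd ⟨x, s⟩ ⟨y, t⟩ ⟨z, w⟩
    · intro x y s t; exact (erm ⟨x, s⟩ ⟨y, t⟩).symm
    · intro x s; exact er2 ⟨x, s⟩
    · intro x y s t; exact emr ⟨x, s⟩ ⟨y, t⟩
    · intro x s; exact eidem ⟨x, s⟩
  · rintro ⟨⟨h1, h2, h3, h4, h5⟩, h6⟩
    refine ⟨⟨⟨?_, ?_⟩, ?_⟩, ?_, ?_, ?_⟩
    · rintro ⟨x, s⟩ ⟨y, t⟩ ⟨z, w⟩; exact h2 x y z s t w
    · rintro ⟨y, t⟩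
      have hfg : ∀ p, extOp op S α (extOp op S α p (extRho rho S β ⟨y, t⟩)) ⟨y, t⟩ = p := by
        rintro ⟨x, s⟩; exact h5 x y s t
      have hgf : ∀ p, extOp op S α (extOp op S α p ⟨y, t⟩) (extRho rho S β ⟨y, t⟩) = p := by
        rintro ⟨x, s⟩
        have key : extOp op S α (extOp op S α ⟨x, s⟩
            (extRho rho S β ⟨rho y, β y t⟩)) ⟨rho y, β y t⟩ = ⟨x, s⟩ :=
          h5 x (rho y) s (β y t)
        have h4' : extRho rho S β ⟨rho y, β y t⟩ = (⟨y, t⟩ : Sigma S) := h4 y t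
        rw [h4'] at key
        exact key
      exact Function.bijective_iff_has_inverse.mpr ⟨fun p => extOp op S α p (extRho rho S β ⟨y, t⟩), hgf, hfg⟩
    · rintro ⟨x, s⟩; exact h6 x s
    · rintro ⟨x, s⟩; exact h4 x s
    · rintro ⟨x, s⟩ ⟨y, t⟩; exact (h3 x y s t).symm
    · rintro ⟨x, s⟩ ⟨y, t⟩; exact h5 x y s t
end

section
/- Let (α,β) be a dynamical cocycle of a symmetric rack (X,ρ) over a family of sets S = {S_x}_{x∈X}, and let γ = {γ_x}_{x∈X} be a family of permutations γ_x of S_x. Define α′_{x,y}(s,t) = γ_{x*y}(α_{x,y}(γ_x⁻¹(s),γ_y⁻¹(t))) and β′_x(s) = γ_{ρ(x)}(β_x(γ_x⁻¹(s))). Then (α′,β′) is also a dynamical cocycle of (X,ρ) over S; moreover, if (X,ρ) is a symmetric quandle and (α,β) satisfies condition (6), then so does (α′,β′). -/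
/-- twisting a dynamical cocycle `(α,β)` of a symmetric rack by a family
of permutations `γ` yields another dynamical cocycle `(α′,β′)`; moreover if `(X,ρ)` is
a symmetric quandle and `(α,β)` satisfies condition (6), then so does `(α′,β′)`. -/
theorem statement2 {X : Type*} (op : X → X → X) (rho : X → X)
    (hrack : IsRackOp op) (hinv : IsGoodInv op rho)
    (S : X → Type*) (α : ∀ x y, S x → S y → S (op x y)) (β : ∀ x, S x → S (rho x))
    (hdyn : DynCocycle op rho S α β) (γ : ∀ x, S x ≃ S x) :
    DynCocycle op rho S
      (fun x y s t => γ (op x y) (α x y ((γ x).symm s) ((γ y).symm t)))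
      (fun x s => γ (rho x) (β x ((γ x).symm s))) ∧
    ((∀ x, op x x = x) → Cond6 op S α →
      Cond6 op S (fun x y s t => γ (op x y) (α x y ((γ x).symm s) ((γ y).symm t)))) := by
  obtain ⟨c1, c2, c3, c4, c5⟩ := hdyn
  have key : ∀ {a b : X} {u : S a} {v : S b},
      (⟨a, u⟩ : Sigma S) = ⟨b, v⟩ → (⟨a, γ a u⟩ : Sigma S) = ⟨b, γ b v⟩ := by
    intro a b u v h
    obtain ⟨rfl, h2⟩ := Sigma.mk.inj_iff.mp h
    rw [eq_of_heq h2]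
  refine ⟨⟨?_, ?_, ?_, ?_, ?_⟩, ?_⟩
  · intro x y t
    exact ((γ (op x y)).bijective.comp (c1 x y ((γ y).symm t))).comp (γ x).symm.bijective
  · intro x y z s t w
    simpa using key (c2 x y z ((γ x).symm s) ((γ y).symm t) ((γ z).symm w))
  · intro x y s t
    simpa using key (c3 x y ((γ x).symm s) ((γ y).symm t))
  · intro x s
    simpa using key (c4 x ((γ x).symm s))
  · intro x y s t
    simpa using key (c5 x y ((γ x).symm s) ((γ y).symm t))
  · intro _ h6 x s
    simpa using key (h6 x ((γ x).symm s))
end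

section
/- Let (α,β) and (α′,β′) be dynamical cocycles of a symmetric rack (X,ρ) over a family of sets S = {S_x}_{x∈X}. Then there exists an isomorphism of symmetric racks T: X ×_{(α,β)} S → X ×_{(α′,β′)} S satisfying p ∘ T = p, where p(x,s) = x is the natural projection, if and only if (α,β) and (α′,β′) are cohomologous. -/
/-- Dynamical cocycles `(α,β)` and `(α′,β′)` are cohomologous: there is a family of
permutations `γ_x` of `S_x` with `α′ x y s t = γ (x*y) (α x y (γ x)⁻¹ s (γ y)⁻¹ t)` and
`β′ x s = γ (ρ x) (β x ((γ x)⁻¹ s))`. -/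
def Cohomologous {X : Type*} (op : X → X → X) (rho : X → X) (S : X → Type*)
    (α : ∀ x y, S x → S y → S (op x y)) (β : ∀ x, S x → S (rho x))
    (α' : ∀ x y, S x → S y → S (op x y)) (β' : ∀ x, S x → S (rho x)) : Prop :=
  ∃ γ : ∀ x, S x ≃ S x,
    (∀ (x y : X) (s : S x) (t : S y),
      α' x y s t = γ (op x y) (α x y ((γ x).symm s) ((γ y).symm t))) ∧
    (∀ (x : X) (s : S x), β' x s = γ (rho x) (β x ((γ x).symm s)))

section FiberPreserving

variable {X : Type*} {S : X → Type*}

theorem exists_equiv_of_bijective_of_fst_eq {T : Sigma S → Sigma S} (hbij : Function.Bijective T)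
    (hfst : ∀ p, (T p).1 = p.1) :
    ∃ γ : ∀ x, S x ≃ S x, ∀ p, T p = Equiv.sigmaCongrRight γ p := by
  have hmk : ∀ (x : X) (s : S x), ∃ u : S x, T ⟨x, s⟩ = ⟨x, u⟩ := fun x s =>
    ⟨cast (congrArg S (hfst _)) (T ⟨x, s⟩).2, Sigma.ext (hfst _) (by simp)⟩
  choose g hg using hmk
  have hg_bij : ∀ x, Function.Bijective (g x) := by
    refine fun x => ⟨fun s s' h => ?_, fun u => ?_⟩
    · simpa using hbij.1 (by rw [hg, hg, h] : T ⟨x, s⟩ = T ⟨x, s'⟩)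
    · obtain ⟨⟨y, s⟩, hp⟩ := hbij.2 ⟨x, u⟩
      obtain rfl : y = x := (hfst ⟨y, s⟩).symm.trans (congrArg Sigma.fst hp)
      exact ⟨s, by simpa using (hg y s).symm.trans hp⟩
  exact ⟨fun x => Equiv.ofBijective (g x) (hg_bij x), fun ⟨x, s⟩ => hg x s⟩

variable (γ : ∀ x, S x ≃ S x)

theorem sigmaCongrRight_extOp_iff {op : X → X → X} (α α' : ∀ x y, S x → S y → S (op x y)) :
    (∀ p q, Equiv.sigmaCongrRight γ (extOp op S α p q)
        = extOp op S α' (Equiv.sigmaCongrRight γ p) (Equiv.sigmaCongrRight γ q)) ↔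
      ∀ (x y : X) (s : S x) (t : S y),
        α' x y s t = γ (op x y) (α x y ((γ x).symm s) ((γ y).symm t)) := by
  refine ⟨fun h x y s t => ?_, fun h ⟨x, s⟩ ⟨y, t⟩ => ?_⟩
  · simpa [extOp, Equiv.sigmaCongrRight, eq_comm] using h ⟨x, (γ x).symm s⟩ ⟨y, (γ y).symm t⟩
  · simp [extOp, Equiv.sigmaCongrRight, h]

theorem sigmaCongrRight_extRho_iff {rho : X → X} (β β' : ∀ x, S x → S (rho x)) :
    (∀ p, Equiv.sigmaCongrRight γ (extRho rho S β p)
        = extRho rho S β' (Equiv.sigmaCongrRight γ p)) ↔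
      ∀ (x : X) (s : S x), β' x s = γ (rho x) (β x ((γ x).symm s)) := by
  refine ⟨fun h x s => ?_, fun h ⟨x, s⟩ => ?_⟩
  · simpa [extRho, Equiv.sigmaCongrRight, eq_comm] using h ⟨x, (γ x).symm s⟩
  · simp [extRho, Equiv.sigmaCongrRight, h]

end FiberPreserving

theorem statement3_general {X : Type*} (op : X → X → X) (rho : X → X)
    (S : X → Type*) (α : ∀ x y, S x → S y → S (op x y)) (β : ∀ x, S x → S (rho x))
    (α' : ∀ x y, S x → S y → S (op x y)) (β' : ∀ x, S x → S (rho x)) :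
    (∃ T : Sigma S → Sigma S,
      Function.Bijective T ∧
      (∀ p q, T (extOp op S α p q) = extOp op S α' (T p) (T q)) ∧
      (∀ p, T (extRho rho S β p) = extRho rho S β' (T p)) ∧
      (∀ p, (T p).1 = p.1))
      ↔ Cohomologous op rho S α β α' β' := by
  constructor
  · rintro ⟨T, hbij, hop, hrho, hfst⟩
    obtain ⟨γ, hT⟩ := exists_equiv_of_bijective_of_fst_eq hbij hfst
    obtain rfl : T = Equiv.sigmaCongrRight γ := funext hT
    exact ⟨γ, (sigmaCongrRight_extOp_iff γ α α').1 hop, (sigmaCongrRight_extRho_iff γ β β').1 hrho⟩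
  · rintro ⟨γ, hα, hβ⟩
    exact ⟨Equiv.sigmaCongrRight γ, (Equiv.sigmaCongrRight γ).bijective,
      (sigmaCongrRight_extOp_iff γ α α').2 hα, (sigmaCongrRight_extRho_iff γ β β').2 hβ,
      fun _ => rfl⟩

/-- there is an isomorphism of symmetric racks
`T : X ×_{(α,β)} S → X ×_{(α′,β′)} S` over `X` (i.e. `p ∘ T = p`) if and only if
`(α,β)` and `(α′,β′)` are cohomologous. -/
theorem statement3 {X : Type*} (op : X → X → X) (rho : X → X)
    (hrack : IsRackOp op) (hinv : IsGoodInv op rho)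
    (S : X → Type*) (α : ∀ x y, S x → S y → S (op x y)) (β : ∀ x, S x → S (rho x))
    (α' : ∀ x y, S x → S y → S (op x y)) (β' : ∀ x, S x → S (rho x))
    (hdyn : DynCocycle op rho S α β) (hdyn' : DynCocycle op rho S α' β') :
    (∃ T : Sigma S → Sigma S,
      Function.Bijective T ∧
      (∀ p q, T (extOp op S α p q) = extOp op S α' (T p) (T q)) ∧
      (∀ p, T (extRho rho S β p) = extRho rho S β' (T p)) ∧
      (∀ p, (T p).1 = p.1))
      ↔ Cohomologous op rho S α β α' β' :=
  statement3_general op rho S α β α' β'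
end

section
/- Let (X,ρ) be a symmetric rack, {A_x}_{x∈X} a family of abelian groups, φ_{x,y}: A_x → A_{x*y} group isomorphisms, ψ_{x,y}: A_y → A_{x*y} and η_x: A_x → A_{ρ(x)} group homomorphisms, and σ a map assigning to each x,y ∈ X an element σ_{x,y} ∈ A_{x*y}. Define α_{x,y}(a,b) = φ_{x,y}(a) + ψ_{x,y}(b) + σ_{x,y} for a ∈ A_x, b ∈ A_y, and β_x(a) = η_x(a). Then (α,β) is a dynamical cocycle of (X,ρ) over {A_x} if and only if (A,φ,ψ,η) is an (X,ρ)-module and σ is a symmetric rack 2-cocycle. -/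
section Helpers

variable {X : Type*} {A : X → Type*} [∀ x, AddCommGroup (A x)]

/-- Transport along an equality of indices, as an additive equivalence. -/
def trA {a b : X} (h : a = b) : A a ≃+ A b := by subst h; exact AddEquiv.refl _

@[simp] lemma trA_rfl {a : X} (u : A a) : trA (rfl : a = a) u = u := rfl

lemma sigma_eq_iff {a b : X} (h : a = b) (u : A a) (v : A b) :
    (⟨a, u⟩ : Sigma A) = ⟨b, v⟩ ↔ trA h u = v := by subst h; simp

lemma sigma_eq_iff' {a b : X} (h : b = a) (u : A a) (v : A b) :
    (⟨a, u⟩ : Sigma A) = ⟨b, v⟩ ↔ u = trA h v := by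
  subst h; simp [eq_comm]

end Helpers



/-- An `(X,ρ)`-module structure (axioms (M1)–(M8)) on the family of abelian groups `A`. -/
def IsXModule {X : Type*} (op : X → X → X) (rho : X → X)
    (A : X → Type*) [∀ x, AddCommGroup (A x)]
    (φ : ∀ x y, A x ≃+ A (op x y)) (ψ : ∀ x y, A y →+ A (op x y))
    (η : ∀ x, A x →+ A (rho x)) : Prop :=
  -- (M1)
  (∀ (x y z : X) (a : A x),
    (⟨op (op x y) z, φ (op x y) z (φ x y a)⟩ : Sigma A)
      = ⟨op (op x z) (op y z), φ (op x z) (op y z) (φ x z a)⟩) ∧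
  -- (M2)
  (∀ (x y z : X) (a : A y),
    (⟨op (op x y) z, φ (op x y) z (ψ x y a)⟩ : Sigma A)
      = ⟨op (op x z) (op y z), ψ (op x z) (op y z) (φ y z a)⟩) ∧
  -- (M3)
  (∀ (x : X) (a : A x), (⟨rho (rho x), η (rho x) (η x a)⟩ : Sigma A) = ⟨x, a⟩) ∧
  -- (M4)
  (∀ (x y : X) (a : A x),
    (⟨rho (op x y), η (op x y) (φ x y a)⟩ : Sigma A)
      = ⟨op (rho x) y, φ (rho x) y (η x a)⟩) ∧
  -- (M5)
  (∀ (x y : X) (b : A y),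
    (⟨op (rho x) y, ψ (rho x) y b⟩ : Sigma A)
      = ⟨rho (op x y), η (op x y) (ψ x y b)⟩) ∧
  -- (M6)
  (∀ (x y : X) (a : A x),
    (⟨op (op x (rho y)) y, φ (op x (rho y)) y (φ x (rho y) a)⟩ : Sigma A) = ⟨x, a⟩) ∧
  -- (M7)
  (∀ (x y z : X) (a : A z),
    (⟨op (op x y) z, ψ (op x y) z a⟩ : Sigma A)
      = ⟨op (op x z) (op y z),
          φ (op x z) (op y z) (ψ x z a) + ψ (op x z) (op y z) (ψ y z a)⟩) ∧
  -- (M8)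
  (∀ (x y : X) (b : A y),
    φ (op x (rho y)) y (ψ x (rho y) (η y b)) = - ψ (op x (rho y)) y b)

/-- `σ` is a symmetric rack 2-cocycle: conditions (F1)–(F3). -/
def IsRack2Cocycle {X : Type*} (op : X → X → X) (rho : X → X)
    (A : X → Type*) [∀ x, AddCommGroup (A x)]
    (φ : ∀ x y, A x ≃+ A (op x y)) (ψ : ∀ x y, A y →+ A (op x y))
    (η : ∀ x, A x →+ A (rho x)) (σ : ∀ x y, A (op x y)) : Prop :=
  -- (F1)
  (∀ x y z : X,
    (⟨op (op x y) z, σ (op x y) z + φ (op x y) z (σ x y)⟩ : Sigma A)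
      = ⟨op (op x z) (op y z),
          φ (op x z) (op y z) (σ x z) + σ (op x z) (op y z) + ψ (op x z) (op y z) (σ y z)⟩) ∧
  -- (F2)
  (∀ x y : X,
    (⟨op (rho x) y, σ (rho x) y⟩ : Sigma A) = ⟨rho (op x y), η (op x y) (σ x y)⟩) ∧
  -- (F3)
  (∀ x y : X, φ (op x (rho y)) y (σ x (rho y)) = - σ (op x (rho y)) y)

set_option maxHeartbeats 1000000 in
/-- with `α x y a b = φ x y a + ψ x y b + σ x y` and `β x = η x`, the pair
`(α,β)` is a dynamical cocycle of the symmetric rack `(X,ρ)` over `{A_x}` if and only if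
`(A,φ,ψ,η)` is an `(X,ρ)`-module and `σ` is a symmetric rack 2-cocycle. -/
theorem statement4 {X : Type*} (op : X → X → X) (rho : X → X)
    (hrack : IsRackOp op) (hinv : IsGoodInv op rho)
    (A : X → Type*) [∀ x, AddCommGroup (A x)]
    (φ : ∀ x y, A x ≃+ A (op x y)) (ψ : ∀ x y, A y →+ A (op x y))
    (η : ∀ x, A x →+ A (rho x)) (σ : ∀ x y, A (op x y)) :
    DynCocycle op rho A (fun x y a b => φ x y a + ψ x y b + σ x y) (fun x a => η x a)
      ↔ (IsXModule op rho A φ ψ η ∧ IsRack2Cocycle op rho A φ ψ η σ) := by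
  constructor
  · intro h
    obtain ⟨c1, c2, c3, c4, c5⟩ := h
    refine ⟨⟨?_, ?_, ?_, ?_, ?_, ?_, ?_, ?_⟩, ?_, ?_, ?_⟩
    · -- M1
      intro x y z a
      have h2 := hrack.1 x y z
      have e := (sigma_eq_iff h2 _ _).mp (c2 x y z a 0 0)
      have e0 := (sigma_eq_iff h2 _ _).mp (c2 x y z 0 0 0)
      simp only [map_add, map_zero, add_zero, zero_add] at e e0
      rw [sigma_eq_iff h2]
      linear_combination (norm := abel1) e - e0
    · -- M2
      intro x y z a
      have h2 := hrack.1 x y z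
      have e := (sigma_eq_iff h2 _ _).mp (c2 x y z 0 a 0)
      have e0 := (sigma_eq_iff h2 _ _).mp (c2 x y z 0 0 0)
      simp only [map_add, map_zero, add_zero, zero_add] at e e0
      rw [sigma_eq_iff h2]
      linear_combination (norm := abel1) e - e0
    · -- M3
      intro x a; exact c4 x a
    · -- M4
      intro x y a
      have hr := hinv.2.1 x y
      have e := (sigma_eq_iff' hr _ _).mp (c3 x y a 0)
      have e0 := (sigma_eq_iff' hr _ _).mp (c3 x y 0 0)
      simp only [map_add, map_zero, add_zero, zero_add] at e e0
      rw [sigma_eq_iff hr]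
      linear_combination (norm := abel1) e0 - e
    · -- M5
      intro x y b
      have hr := hinv.2.1 x y
      have e := (sigma_eq_iff' hr _ _).mp (c3 x y 0 b)
      have e0 := (sigma_eq_iff' hr _ _).mp (c3 x y 0 0)
      simp only [map_add, map_zero, add_zero, zero_add] at e e0
      rw [sigma_eq_iff' hr]
      linear_combination (norm := abel1) e - e0
    · -- M6
      intro x y a
      have h5 := hinv.2.2 x y
      have e := (sigma_eq_iff h5 _ _).mp (c5 x y a 0)
      have e0 := (sigma_eq_iff h5 _ _).mp (c5 x y 0 0)
      simp only [map_add, map_zero, add_zero, zero_add] at e e0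
      rw [sigma_eq_iff h5]
      linear_combination (norm := abel1) e - e0
    · -- M7
      intro x y z a
      have h2 := hrack.1 x y z
      have e := (sigma_eq_iff h2 _ _).mp (c2 x y z 0 0 a)
      have e0 := (sigma_eq_iff h2 _ _).mp (c2 x y z 0 0 0)
      simp only [map_add, map_zero, add_zero, zero_add] at e e0
      rw [sigma_eq_iff h2]
      linear_combination (norm := abel1) e - e0
    · -- M8
      intro x y b
      have h5 := hinv.2.2 x y
      have e := (sigma_eq_iff h5 _ _).mp (c5 x y 0 b)
      have e0 := (sigma_eq_iff h5 _ _).mp (c5 x y 0 0)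
      simp only [map_add, map_zero, add_zero, zero_add] at e e0
      apply (trA (A := A) h5).injective
      rw [map_neg]
      linear_combination (norm := abel1) e - e0
    · -- F1
      intro x y z
      have h2 := hrack.1 x y z
      have e0 := (sigma_eq_iff h2 _ _).mp (c2 x y z 0 0 0)
      simp only [map_add, map_zero, add_zero, zero_add] at e0
      rw [sigma_eq_iff h2]
      simp only [map_add]
      linear_combination (norm := abel1) e0
    · -- F2
      intro x y
      have hr := hinv.2.1 x y
      have e0 := (sigma_eq_iff' hr _ _).mp (c3 x y 0 0)
      simp only [map_add, map_zero, add_zero, zero_add] at e0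
      rw [sigma_eq_iff' hr]
      linear_combination (norm := abel1) e0
    · -- F3
      intro x y
      have h5 := hinv.2.2 x y
      have e0 := (sigma_eq_iff h5 _ _).mp (c5 x y 0 0)
      simp only [map_add, map_zero, add_zero, zero_add] at e0
      apply (trA (A := A) h5).injective
      rw [map_neg]
      linear_combination (norm := abel1) e0
  · rintro ⟨⟨m1, m2, m3, m4, m5, m6, m7, m8⟩, f1, f2, f3⟩
    refine ⟨?_, ?_, ?_, ?_, ?_⟩
    · -- bijectivity
      intro x y t
      have : (fun s : A x => φ x y s + ψ x y t + σ x y)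
          = (fun u => u + (ψ x y t + σ x y)) ∘ (φ x y) := by
        funext s; simp [add_assoc]
      rw [this]
      exact (Equiv.addRight (ψ x y t + σ x y)).bijective.comp (φ x y).bijective
    · -- (2)
      intro x y z s t w
      have h2 := hrack.1 x y z
      have em1 := (sigma_eq_iff h2 _ _).mp (m1 x y z s)
      have em2 := (sigma_eq_iff h2 _ _).mp (m2 x y z t)
      have em7 := (sigma_eq_iff h2 _ _).mp (m7 x y z w)
      have ef1 := (sigma_eq_iff h2 _ _).mp (f1 x y z)
      simp only [map_add] at em1 em2 em7 ef1 ⊢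
      rw [sigma_eq_iff h2]
      simp only [map_add]
      linear_combination (norm := abel1) em1 + em2 + em7 + ef1
    · -- (3)
      intro x y s t
      have hr := hinv.2.1 x y
      have em4 := (sigma_eq_iff hr _ _).mp (m4 x y s)
      have em5 := (sigma_eq_iff' hr _ _).mp (m5 x y t)
      have ef2 := (sigma_eq_iff' hr _ _).mp (f2 x y)
      simp only [map_add] at em4 em5 ef2 ⊢
      rw [sigma_eq_iff' hr]
      simp only [map_add]
      linear_combination (norm := abel1) em5 + ef2 - em4
    · -- (4)
      intro x s; exact m3 x s
    · -- (5)
      intro x y s t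
      have h5 := hinv.2.2 x y
      have em6 := (sigma_eq_iff h5 _ _).mp (m6 x y s)
      have em8 := congrArg (trA (A := A) h5) (m8 x y t)
      have ef3 := congrArg (trA (A := A) h5) (f3 x y)
      rw [map_neg] at em8 ef3
      rw [sigma_eq_iff h5]
      beta_reduce
      simp only [map_add]
      linear_combination (norm := abel1) em6 + em8 + ef3
end

section
/- Let (X,ρ) be a symmetric quandle, {A_x}_{x∈X} a family of abelian groups, φ_{x,y}: A_x → A_{x*y} group isomorphisms, ψ_{x,y}: A_y → A_{x*y} and η_x: A_x → A_{ρ(x)} group homomorphisms, and σ a map assigning to each x,y ∈ X an element σ_{x,y} ∈ A_{x*y}. Define α_{x,y}(a,b) = φ_{x,y}(a) + ψ_{x,y}(b) + σ_{x,y} for a ∈ A_x, b ∈ A_y, and β_x(a) = η_x(a). Then (α,β) is a dynamical cocycle of the symmetric quandle (X,ρ) over {A_x} (i.e. satisfies conditions (1)–(5) and (6) α_{x,x}(a,a) = a) if and only if (A,φ,ψ,η) is an (X,ρ)-module satisfying additionally (M9) φ_{x,x}(a) + ψ_{x,x}(a) = a for all x ∈ X, a ∈ A_x, and σ is a symmetric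 quandle 2-cocycle (a symmetric rack 2-cocycle with σ_{x,x} = 0 for all x ∈ X). -/
section Helpers
variable {X : Type*} {A : X → Type*}

private lemma smk_fst {a b : X} {u : A a} {v : A b}
    (h : (⟨a, u⟩ : Sigma A) = ⟨b, v⟩) : a = b := congrArg Sigma.fst h

private lemma smk_snd {a : X} {u v : A a}
    (h : (⟨a, u⟩ : Sigma A) = ⟨a, v⟩) : u = v := by
  simpa using h

variable [∀ x, AddCommGroup (A x)]

private lemma smk_zero {a b : X} (h : a = b) :
    (⟨a, (0 : A a)⟩ : Sigma A) = ⟨b, 0⟩ := by subst h; rfl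

private lemma smk_add {a b : X} {u u' : A a} {v v' : A b}
    (h : (⟨a, u⟩ : Sigma A) = ⟨b, v⟩) (h' : (⟨a, u'⟩ : Sigma A) = ⟨b, v'⟩) :
    (⟨a, u + u'⟩ : Sigma A) = ⟨b, v + v'⟩ := by
  have hab := smk_fst h; subst hab
  rw [smk_snd h, smk_snd h']

private lemma smk_sub {a b : X} {u u' : A a} {v v' : A b}
    (h : (⟨a, u⟩ : Sigma A) = ⟨b, v⟩) (h' : (⟨a, u'⟩ : Sigma A) = ⟨b, v'⟩) :
    (⟨a, u - u'⟩ : Sigma A) = ⟨b, v - v'⟩ := by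
  have hab := smk_fst h; subst hab
  rw [smk_snd h, smk_snd h']

private lemma smk_trans_eq {a b : X} {u u' : A a} {v v' : A b}
    (h : (⟨a, u⟩ : Sigma A) = ⟨b, v⟩) (hu : u' = u) (hv : v' = v) :
    (⟨a, u'⟩ : Sigma A) = ⟨b, v'⟩ := by rw [hu, hv]; exact h

private lemma smk_eq_zero {a b : X} {u : A a}
    (h : (⟨a, u⟩ : Sigma A) = ⟨b, (0 : A b)⟩) : u = 0 :=
  smk_snd (h.trans (smk_zero (smk_fst h)).symm)

end Helpers


/-- quandle case. With `α x y a b = φ x y a + ψ x y b + σ x y` and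
`β x = η x`, the pair `(α,β)` is a dynamical cocycle of the symmetric quandle `(X,ρ)`
over `{A_x}` (conditions (1)–(6)) if and only if `(A,φ,ψ,η)` is an `(X,ρ)`-module
satisfying additionally (M9) `φ x x a + ψ x x a = a`, and `σ` is a symmetric quandle
2-cocycle (a symmetric rack 2-cocycle with `σ x x = 0`). -/


theorem statement5 {X : Type*} (op : X → X → X) (rho : X → X)
    (hq : IsQuandleOp op) (hinv : IsGoodInv op rho)
    (A : X → Type*) [∀ x, AddCommGroup (A x)]
    (φ : ∀ x y, A x ≃+ A (op x y)) (ψ : ∀ x y, A y →+ A (op x y))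
    (η : ∀ x, A x →+ A (rho x)) (σ : ∀ x y, A (op x y)) :
    (DynCocycle op rho A (fun x y a b => φ x y a + ψ x y b + σ x y) (fun x a => η x a) ∧
      Cond6 op A (fun x y a b => φ x y a + ψ x y b + σ x y))
      ↔ (IsXModule op rho A φ ψ η ∧
          (∀ (x : X) (a : A x), (⟨op x x, φ x x a + ψ x x a⟩ : Sigma A) = ⟨x, a⟩) ∧
          IsRack2Cocycle op rho A φ ψ η σ ∧
          (∀ x : X, σ x x = 0)) := by
  constructor
  · rintro ⟨⟨-, H2, H3, H4, H5⟩, H6⟩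
    have h20 : ∀ x y z : X, _ := fun x y z => H2 x y z 0 0 0
    have h30 : ∀ x y : X, _ := fun x y => H3 x y 0 0
    have h50 : ∀ x y : X, _ := fun x y => H5 x y 0 0
    have h60 : ∀ x : X, _ := fun x => H6 x 0
    simp only [map_zero, add_zero, zero_add, map_add] at h20 h30 h50 h60
    refine ⟨⟨?_, ?_, ?_, ?_, ?_, ?_, ?_, ?_⟩, ?_, ⟨?_, ?_, ?_⟩, ?_⟩
    · -- M1
      intro x y z a
      have h1 := H2 x y z a 0 0
      simp only [map_zero, add_zero, zero_add, map_add] at h1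
      exact smk_trans_eq (smk_sub h1 (h20 x y z)) (by abel) (by abel)
    · -- M2
      intro x y z a
      have h1 := H2 x y z 0 a 0
      simp only [map_zero, add_zero, zero_add, map_add] at h1
      exact smk_trans_eq (smk_sub h1 (h20 x y z)) (by abel) (by abel)
    · -- M3
      intro x a
      exact H4 x a
    · -- M4
      intro x y a
      have h1 := H3 x y a 0
      simp only [map_zero, add_zero, zero_add, map_add] at h1
      exact (smk_trans_eq (smk_sub h1 (h30 x y)) (by abel) (by abel)).symm
    · -- M5
      intro x y b
      have h1 := H3 x y 0 b
      simp only [map_zero, add_zero, zero_add, map_add] at h1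
      exact smk_trans_eq (smk_sub h1 (h30 x y)) (by abel) (by abel)
    · -- M6
      intro x y a
      have h1 := H5 x y a 0
      simp only [map_zero, add_zero, zero_add, map_add] at h1
      exact smk_trans_eq (smk_sub h1 (h50 x y)) (by abel) (by abel)
    · -- M7
      intro x y z a
      have h1 := H2 x y z 0 0 a
      simp only [map_zero, add_zero, zero_add, map_add] at h1
      exact smk_trans_eq (smk_sub h1 (h20 x y z)) (by abel) (by abel)
    · -- M8
      intro x y b
      have h1 := H5 x y 0 b
      simp only [map_zero, add_zero, zero_add, map_add] at h1
      have key := smk_trans_eq (smk_sub h1 (h50 x y))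
        (show φ (op x (rho y)) y (ψ x (rho y) (η y b)) + ψ (op x (rho y)) y b = _ by abel)
        (show (0 : A x) = 0 - 0 by abel)
      exact eq_neg_of_add_eq_zero_left (smk_eq_zero key)
    · -- M9
      intro x a
      have h1 := H6 x a
      simp only [map_zero, add_zero, zero_add, map_add] at h1
      exact smk_trans_eq (smk_sub h1 (h60 x)) (by abel) (by abel)
    · -- F1
      intro x y z
      exact smk_trans_eq (h20 x y z) (by abel) (by abel)
    · -- F2
      intro x y
      exact smk_trans_eq (h30 x y) (by abel) (by abel)
    · -- F3
      intro x y
      exact eq_neg_of_add_eq_zero_left (smk_eq_zero (h50 x y))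
    · -- sigma diagonal
      intro x
      exact smk_eq_zero (h60 x)
  · rintro ⟨⟨M1, M2, M3, M4, M5, M6, M7, M8⟩, M9, ⟨F1, F2, F3⟩, S0⟩
    refine ⟨⟨?_, ?_, ?_, ?_, ?_⟩, ?_⟩
    · -- bijectivity
      intro x y t
      have h : (fun s : A x => φ x y s + ψ x y t + σ x y)
          = fun s : A x => (φ x y).toEquiv.trans (Equiv.addRight (ψ x y t + σ x y)) s := by
        funext s
        simp [add_assoc]
      rw [h]
      exact Equiv.bijective _
    · -- condition (2)
      intro x y z s t w
      have key := smk_add (smk_add (smk_add (M1 x y z s) (M2 x y z t)) (F1 x y z)) (M7 x y z w)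
      exact smk_trans_eq key (by simp only [map_add]; try abel) (by simp only [map_add]; try abel)
    · -- condition (3)
      intro x y s t
      have key := smk_add (smk_add (M4 x y s).symm (M5 x y t)) (F2 x y)
      exact smk_trans_eq key (by simp only [map_add]; try abel) (by simp only [map_add]; try abel)
    · -- condition (4)
      intro x s
      exact M3 x s
    · -- condition (5)
      intro x y s t
      exact smk_trans_eq (M6 x y s)
        (by simp only [map_add, M8 x y t, F3 x y]; try abel) rfl
    · -- condition (6)
      intro x s
      exact smk_trans_eq (M9 x s) (by simp only [S0, add_zero]) rfl
end

section
/- Let (X,ρ) be a symmetric rack, (A,φ,ψ,η) an (X,ρ)-module, and σ, σ′ symmetric rack 2-cocycles that are cohomologous, i.e. there exists a map τ with τ(x) ∈ A_x for each x ∈ X satisfying η_x(τ(x)) = τ(ρ(x)) and σ_{x,y} − σ′_{x,y} = φ_{x,y}(τ(x)) − τ(x*y) + ψ_{x,y}(τ(y)) for all x,y ∈ X. Let (α,β) and (α′,β′) be the dynamical cocycles defined by α_{x,y}(a,b) = φ_{x,y}(a) + ψ_{x,y}(b) + σ_{x,y}, α′_{x,y}(a,b) = φ_{x,y}(a) + ψ_{x,y}(b)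 + σ′_{x,y} and β_x = β′_x = η_x. Then (α,β) and (α′,β′) are cohomologous dynamical cocycles; indeed the family of permutations γ_x(a) = τ(x) + a of A_x realizes the cohomology. -/
/-- if the symmetric rack 2-cocycles `σ` and `σ′` are cohomologous via `τ`,
then the associated dynamical cocycles `(α,β)` and `(α′,β′)` are cohomologous, and the
family of permutations `γ_x(a) = τ x + a` realizes the cohomology. -/
theorem statement6 {X : Type*} (op : X → X → X) (rho : X → X)
    (hrack : IsRackOp op) (hinv : IsGoodInv op rho)
    (A : X → Type*) [∀ x, AddCommGroup (A x)]
    (φ : ∀ x y, A x ≃+ A (op x y)) (ψ : ∀ x y, A y →+ A (op x y))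
    (η : ∀ x, A x →+ A (rho x))
    (hmod : IsXModule op rho A φ ψ η)
    (σ σ' : ∀ x y, A (op x y))
    (hσ : IsRack2Cocycle op rho A φ ψ η σ) (hσ' : IsRack2Cocycle op rho A φ ψ η σ')
    (τ : ∀ x, A x)
    (hτ1 : ∀ x, η x (τ x) = τ (rho x))
    (hτ2 : ∀ x y, σ x y - σ' x y = φ x y (τ x) - τ (op x y) + ψ x y (τ y)) :
    Cohomologous op rho A
      (fun x y a b => φ x y a + ψ x y b + σ x y) (fun x a => η x a)
      (fun x y a b => φ x y a + ψ x y b + σ' x y) (fun x a => η x a) ∧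
    -- the cohomology is realized by the family of permutations γ_x(a) = τ x + a:
    (∀ (x y : X) (s : A x) (t : A y),
      φ x y s + ψ x y t + σ' x y
        = τ (op x y) + (φ x y (s - τ x) + ψ x y (t - τ y) + σ x y)) ∧
    (∀ (x : X) (s : A x), η x s = τ (rho x) + η x (s - τ x)) := by
  have key : ∀ (x y : X) (s : A x) (t : A y),
      φ x y s + ψ x y t + σ' x y
        = τ (op x y) + (φ x y (s - τ x) + ψ x y (t - τ y) + σ x y) := by
    intro x y s t
    have h := hτ2 x y
    have hσeq : σ x y = σ' x y + (φ x y (τ x) - τ (op x y) + ψ x y (τ y)) := by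
      rw [← h]; abel
    rw [hσeq, map_sub, map_sub]
    abel
  have keyβ : ∀ (x : X) (s : A x), η x s = τ (rho x) + η x (s - τ x) := by
    intro x s
    rw [map_sub, hτ1]; abel
  refine ⟨⟨fun x => Equiv.addLeft (τ x), ?_, ?_⟩, key, keyβ⟩
  · intro x y s t
    have := key x y s t
    simpa [Equiv.addLeft, sub_eq_neg_add] using this
  · intro x s
    have := keyβ x s
    simpa [Equiv.addLeft, sub_eq_neg_add] using this
end

section
/- Let f: (X̃,ρ̃) → (X,ρ) be a surjective symmetric rack homomorphism, S = {S_x}_{x∈X} a family of sets, and μ_x: f⁻¹(x) → S_x a bijection for each x ∈ X. Define α_{x,y}(s,t) = μ_{x*y}(μ_x⁻¹(s) *̃ μ_y⁻¹(t)) for x,y ∈ X, s ∈ S_x, t ∈ S_y, and β_x(s) = μ_{ρ(x)}(ρ̃(μ_x⁻¹(s))), where *̃ denotes the rack operation of X̃. Then (α,β) is a dynamical cocycle of (X,ρ) over S and the map Φ: X ×_{(α,β)} S → X̃ given by Φ(x,s) = μ_x⁻¹(s) is an isomorphism of symmetric racks; in particular (X̃,ρ̃) ≅ (X ×_{(α,β)}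 S, ρ_{α,β}). The same statement holds with symmetric quandles in place of symmetric racks. -/
/-- given a surjective symmetric rack homomorphism `f : (X̃,ρ̃) → (X,ρ)`,
bijections `μ_x : f⁻¹(x) → S_x`, and `(α,β)` defined by
`α x y s t = μ (x*y) ((μ x)⁻¹ s *̃ (μ y)⁻¹ t)` and `β x s = μ (ρ x) (ρ̃ ((μ x)⁻¹ s))`,
the pair `(α,β)` is a dynamical cocycle of `(X,ρ)` over `S` and
`Φ(x,s) = (μ x)⁻¹ s` is an isomorphism of symmetric racks
`X ×_{(α,β)} S → (X̃,ρ̃)`; moreover if `X̃` is a quandle then condition (6) holds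
(the symmetric quandle case). -/
theorem statement7 {Xt X : Type*} (opT : Xt → Xt → Xt) (rhoT : Xt → Xt)
    (op : X → X → X) (rho : X → X)
    (hrackT : IsRackOp opT) (hinvT : IsGoodInv opT rhoT)
    (hrack : IsRackOp op) (hinv : IsGoodInv op rho)
    (f : Xt → X) (hfsurj : Function.Surjective f)
    (hfop : ∀ a b, f (opT a b) = op (f a) (f b))
    (hfrho : ∀ a, f (rhoT a) = rho (f a))
    (S : X → Type*) (μ : ∀ x, {e : Xt // f e = x} ≃ S x)
    (α : ∀ x y, S x → S y → S (op x y)) (β : ∀ x, S x → S (rho x))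
    (hα : ∀ (x y : X) (s : S x) (t : S y),
      (((μ (op x y)).symm (α x y s t) : {e : Xt // f e = op x y}) : Xt)
        = opT ((μ x).symm s : {e : Xt // f e = x}) ((μ y).symm t : {e : Xt // f e = y}))
    (hβ : ∀ (x : X) (s : S x),
      (((μ (rho x)).symm (β x s) : {e : Xt // f e = rho x}) : Xt)
        = rhoT ((μ x).symm s : {e : Xt // f e = x})) :
    DynCocycle op rho S α β ∧
    (Function.Bijective (fun p : Sigma S => (((μ p.1).symm p.2 : {e : Xt // f e = p.1}) : Xt)) ∧
      (∀ p q : Sigma S,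
        ((((μ (extOp op S α p q).1).symm (extOp op S α p q).2 :
            {e : Xt // f e = (extOp op S α p q).1}) : Xt))
          = opT (((μ p.1).symm p.2 : {e : Xt // f e = p.1}) : Xt)
                (((μ q.1).symm q.2 : {e : Xt // f e = q.1}) : Xt)) ∧
      (∀ p : Sigma S,
        ((((μ (extRho rho S β p).1).symm (extRho rho S β p).2 :
            {e : Xt // f e = (extRho rho S β p).1}) : Xt))
          = rhoT (((μ p.1).symm p.2 : {e : Xt // f e = p.1}) : Xt))) ∧
    ((∀ e, opT e e = e) → Cond6 op S α) := by

  obtain ⟨hdistT, hbijT⟩ := hrackT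
  obtain ⟨hr2T, hrmT, hrcT⟩ := hinvT
  have hΦinj : ∀ p q : Sigma S,
      (((μ p.1).symm p.2 : {e : Xt // f e = p.1}) : Xt)
        = (((μ q.1).symm q.2 : {e : Xt // f e = q.1}) : Xt) → p = q := by
    rintro ⟨x, s⟩ ⟨y, t⟩ h
    have h1 : x = y := by
      have hx := ((μ x).symm s).2
      have hy := ((μ y).symm t).2
      rw [← hx, ← hy]; exact congrArg f h
    subst h1
    simp only [Sigma.mk.inj_iff, heq_eq_eq, true_and]
    exact (μ x).symm.injective (Subtype.ext h)
  refine ⟨⟨?_, ?_, ?_, ?_, ?_⟩, ⟨⟨?_, ?_⟩, ?_, ?_⟩, ?_⟩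
  · -- (1) bijectivity
    intro x y t
    constructor
    · intro s s' h
      have h2 : (((μ (op x y)).symm (α x y s t) : {e : Xt // f e = op x y}) : Xt)
          = (((μ (op x y)).symm (α x y s' t) : {e : Xt // f e = op x y}) : Xt) := by simp only at h; rw [h]
      rw [hα, hα] at h2
      have h3 := (hbijT (((μ y).symm t : {e : Xt // f e = y}) : Xt)).1 h2
      exact (μ x).symm.injective (Subtype.ext h3)
    · intro u
      obtain ⟨a, ha⟩ := (hbijT (((μ y).symm t : {e : Xt // f e = y}) : Xt)).2
        (((μ (op x y)).symm u : {e : Xt // f e = op x y}) : Xt)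
      simp only at ha
      have hfa : f a = x := by
        have h4 := congrArg f ha
        rw [hfop, ((μ y).symm t).2, ((μ (op x y)).symm u).2] at h4
        exact (hrack.2 y).1 h4
      refine ⟨μ x ⟨a, hfa⟩, ?_⟩
      apply (μ (op x y)).symm.injective
      apply Subtype.ext
      rw [hα]
      simp only [Equiv.symm_apply_apply]
      exact ha
  · intro x y z s t w
    apply hΦinj
    simp only [hα, hβ]
    exact hdistT _ _ _
  · intro x y s t
    apply hΦinj
    simp only [hα, hβ]
    exact (hrmT _ _).symm
  · intro x s
    apply hΦinj
    simp only [hβ]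
    exact hr2T _
  · intro x y s t
    apply hΦinj
    simp only [hα, hβ]
    exact hrcT _ _
  · -- injective
    intro p q h
    exact hΦinj p q h
  · -- surjective
    intro e
    refine ⟨⟨f e, μ (f e) ⟨e, rfl⟩⟩, ?_⟩
    simp only [Equiv.symm_apply_apply]
  · intro p q
    exact hα p.1 q.1 p.2 q.2
  · intro p
    exact hβ p.1 p.2
  · intro hq x s
    apply hΦinj
    simp only [hα]
    exact hq _
end

section
/- Let 1 → A → E →^π G → 1 be a short exact sequence of groups (so π: E → G is a surjective group homomorphism with kernel A) and let n ≥ 1. Then there exists a dynamical cocycle (α,β) of the symmetric quandle (Conj_n(G), inv) over the constant family S_x = A such that (Conj_n(E), inv) is isomorphic to Conj_n(G) ×_{(α,β)} A as symmetric quandles. -/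
namespace S8aux

lemma conj_pow' {E : Type*} [Group E] (b c : E) (m : ℕ) :
    (c⁻¹ * b * c) ^ m = c⁻¹ * b ^ m * c := by
  have := conj_pow (i := m) (a := c⁻¹) (b := b)
  simpa using this

variable {E G : Type*} [Group E] [Group G] (π : E →* G) (hπ : Function.Surjective π) (n : ℕ)

noncomputable def sec : G → E := Function.surjInv hπ

lemma pi_sec (x : G) : π (sec π hπ x) = x := Function.surjInv_eq hπ x

lemma pi_ker (s : π.ker) : π (s : E) = 1 := MonoidHom.mem_ker.mp s.2

noncomputable def al (x y : G) (s t : π.ker) : π.ker :=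
  ⟨(sec π hπ ((y ^ n)⁻¹ * x * y ^ n))⁻¹ * ((sec π hπ y * t) ^ n)⁻¹
      * (sec π hπ x * s) * (sec π hπ y * t) ^ n, by
    rw [MonoidHom.mem_ker]
    simp only [map_mul, map_inv, map_pow, pi_sec, pi_ker, mul_one]
    group⟩

noncomputable def be (x : G) (s : π.ker) : π.ker :=
  ⟨(sec π hπ x⁻¹)⁻¹ * (sec π hπ x * s)⁻¹, by
    rw [MonoidHom.mem_ker]
    simp only [map_mul, map_inv, pi_sec, pi_ker, mul_one]
    group⟩

noncomputable def Phi (p : Σ _ : G, π.ker) : E := sec π hπ p.1 * p.2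

lemma pi_Phi (p : Σ _ : G, π.ker) : π (Phi π hπ p) = p.1 := by
  simp [Phi, map_mul, pi_sec, pi_ker]

lemma Phi_inj : Function.Injective (Phi π hπ) := by
  rintro ⟨x, s⟩ ⟨y, t⟩ h
  have h1 : x = y := by
    have := congrArg π h
    simpa [pi_Phi] using this
  subst h1
  have h2 : (s : E) = t := by
    have := h
    simp only [Phi] at this
    exact mul_left_cancel this
  exact congrArg _ (Subtype.ext h2)

lemma Phi_surj : Function.Surjective (Phi π hπ) := by
  intro u
  refine ⟨⟨π u, ⟨(sec π hπ (π u))⁻¹ * u, ?_⟩⟩, ?_⟩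
  · rw [MonoidHom.mem_ker]
    simp [map_mul, pi_sec]
  · simp [Phi]

lemma Phi_al (x y : G) (s t : π.ker) :
    Phi π hπ ⟨(y ^ n)⁻¹ * x * y ^ n, al π hπ n x y s t⟩
      = (Phi π hπ ⟨y, t⟩ ^ n)⁻¹ * Phi π hπ ⟨x, s⟩ * Phi π hπ ⟨y, t⟩ ^ n := by
  simp only [Phi, al]
  group

lemma Phi_be (x : G) (s : π.ker) :
    Phi π hπ ⟨x⁻¹, be π hπ x s⟩ = (Phi π hπ ⟨x, s⟩)⁻¹ := by
  simp only [Phi, be]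
  group

end S8aux

/-- given a short exact sequence `1 → A → E → G → 1` of groups and `n ≥ 1`,
there is a dynamical cocycle `(α,β)` of the symmetric quandle `(Conj_n(G), inv)`
(with operation `x*y = y⁻ⁿ x yⁿ` and involution `x ↦ x⁻¹`) over the constant family
`S_x = A = ker π`, such that `(Conj_n(E), inv)` is isomorphic to
`Conj_n(G) ×_{(α,β)} A` as symmetric quandles. -/
theorem statement8 {E G : Type*} [Group E] [Group G] (π : E →* G)
    (hπ : Function.Surjective π) (n : ℕ) (hn : 1 ≤ n) :
    ∃ (α : ∀ _ _ : G, ↥π.ker → ↥π.ker → ↥π.ker) (β : ∀ _ : G, ↥π.ker → ↥π.ker),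
      DynCocycle (fun x y : G => (y ^ n)⁻¹ * x * y ^ n) (fun x : G => x⁻¹)
        (fun _ : G => ↥π.ker) α β ∧
      Cond6 (fun x y : G => (y ^ n)⁻¹ * x * y ^ n) (fun _ : G => ↥π.ker) α ∧
      ∃ Φ : (Σ _ : G, ↥π.ker) → E,
        Function.Bijective Φ ∧
        (∀ p q : Σ _ : G, ↥π.ker,
          Φ ⟨(q.1 ^ n)⁻¹ * p.1 * q.1 ^ n, α p.1 q.1 p.2 q.2⟩
            = (Φ q ^ n)⁻¹ * Φ p * Φ q ^ n) ∧
        (∀ p : Σ _ : G, ↥π.ker, Φ ⟨p.1⁻¹, β p.1 p.2⟩ = (Φ p)⁻¹) := by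
  classical
  refine ⟨S8aux.al π hπ n, S8aux.be π hπ, ⟨?_, ?_, ?_, ?_, ?_⟩, ?_, S8aux.Phi π hπ,
    ⟨S8aux.Phi_inj π hπ, S8aux.Phi_surj π hπ⟩, fun p q => S8aux.Phi_al π hπ n p.1 q.1 p.2 q.2,
    fun p => S8aux.Phi_be π hπ p.1 p.2⟩
  · -- (1) bijectivity
    intro x y t
    rw [Function.bijective_iff_has_inverse]
    refine ⟨fun u => ⟨(S8aux.sec π hπ x)⁻¹ * (S8aux.sec π hπ y * t) ^ n
        * S8aux.sec π hπ ((y ^ n)⁻¹ * x * y ^ n) * u * ((S8aux.sec π hπ y * t) ^ n)⁻¹, ?_⟩,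
      ?_, ?_⟩
    · rw [MonoidHom.mem_ker]
      simp only [map_mul, map_inv, map_pow, S8aux.pi_sec, S8aux.pi_ker, mul_one]
      group
    · intro s
      refine Subtype.ext ?_
      simp only [S8aux.al]
      group
    · intro u
      refine Subtype.ext ?_
      simp only [S8aux.al]
      group
  · -- (2)
    intro x y z s t w
    apply S8aux.Phi_inj π hπ
    simp only [S8aux.Phi_al]
    rw [S8aux.conj_pow']
    group
  · -- (3)
    intro x y s t
    apply S8aux.Phi_inj π hπ
    simp only [S8aux.Phi_al, S8aux.Phi_be]
    group
  · -- (4)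
    intro x s
    apply S8aux.Phi_inj π hπ
    simp only [S8aux.Phi_be]
    group
  · -- (5)
    intro x y s t
    apply S8aux.Phi_inj π hπ
    simp only [S8aux.Phi_al, S8aux.Phi_be]
    group
  · -- (6) Cond6
    intro x s
    apply S8aux.Phi_inj π hπ
    simp only [S8aux.Phi_al]
    group
end

section
/- Let 1 → A → E →^π G → 1 be a short exact sequence of groups (so π: E → G is a surjective group homomorphism with kernel A). Then there exists a dynamical cocycle (α,β) of the symmetric quandle (Core(G), id) over the constant family S_x = A such that (Core(E), id) is isomorphic to Core(G) ×_{(α,β)} A as symmetric quandles. -/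
/-- Auxiliary: the dynamical cocycle `α` built from a set-theoretic section of `π`,
together with its explicit formula in `E`. -/
theorem statement9_aux {E G : Type*} [Group E] [Group G] (π : E →* G)
    (hπ : Function.Surjective π) :
    ∃ (α : ∀ _ _ : G, ↥π.ker → ↥π.ker → ↥π.ker),
      (∀ x y s t, (α x y s t : E)
        = (Function.surjInv hπ (y * x⁻¹ * y))⁻¹ *
          ((Function.surjInv hπ y * t) * (Function.surjInv hπ x * s)⁻¹ *
            (Function.surjInv hπ y * t))) := by
  classical
  have hσ : ∀ g, π (Function.surjInv hπ g) = g := fun g => Function.surjInv_eq hπ g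
  refine ⟨fun x y s t => ⟨_, ?_⟩, fun x y s t => rfl⟩
  have hs : π (s : E) = 1 := s.2
  have ht : π (t : E) = 1 := t.2
  simp [MonoidHom.mem_ker, hσ, hs, ht]
  group

/-- given a short exact sequence `1 → A → E → G → 1` of groups, there is
a dynamical cocycle `(α,β)` of the symmetric quandle `(Core(G), id)` (with operation
`x*y = y x⁻¹ y` and the identity involution) over the constant family `S_x = A = ker π`,
such that `(Core(E), id)` is isomorphic to `Core(G) ×_{(α,β)} A` as symmetric quandles. -/
theorem statement9 {E G : Type*} [Group E] [Group G] (π : E →* G)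
    (hπ : Function.Surjective π) :
    ∃ (α : ∀ _ _ : G, ↥π.ker → ↥π.ker → ↥π.ker) (β : ∀ _ : G, ↥π.ker → ↥π.ker),
      DynCocycle (fun x y : G => y * x⁻¹ * y) (fun x : G => x)
        (fun _ : G => ↥π.ker) α β ∧
      Cond6 (fun x y : G => y * x⁻¹ * y) (fun _ : G => ↥π.ker) α ∧
      ∃ Φ : (Σ _ : G, ↥π.ker) → E,
        Function.Bijective Φ ∧
        (∀ p q : Σ _ : G, ↥π.ker,
          Φ ⟨q.1 * p.1⁻¹ * q.1, α p.1 q.1 p.2 q.2⟩ = Φ q * (Φ p)⁻¹ * Φ q) ∧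
        (∀ p : Σ _ : G, ↥π.ker, Φ ⟨p.1, β p.1 p.2⟩ = Φ p) := by
  classical
  obtain ⟨α, hαc⟩ := statement9_aux π hπ
  set σ : G → E := Function.surjInv hπ with hσdef
  have hσ : ∀ g, π (σ g) = g := fun g => Function.surjInv_eq hπ g
  set Φ : (Σ _ : G, ↥π.ker) → E := fun p => σ p.1 * p.2 with hΦdef
  have hΦinj : Function.Injective Φ := by
    rintro ⟨x, s⟩ ⟨y, t⟩ h
    have hs : π (s : E) = 1 := s.2
    have ht : π (t : E) = 1 := t.2
    have h1 : x = y := by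
      have := congrArg π h
      simpa [hΦdef, hσ, hs, ht] using this
    subst h1
    have h2 : (s : E) = t := by
      simpa [hΦdef] using h
    simp [Subtype.ext h2]
  have hΦsurj : Function.Surjective Φ := by
    intro e
    refine ⟨⟨π e, ⟨(σ (π e))⁻¹ * e, ?_⟩⟩, ?_⟩
    · simp [MonoidHom.mem_ker, hσ]
    · simp [hΦdef]
  have hΦα : ∀ (x y : G) (s t : ↥π.ker),
      Φ ⟨y * x⁻¹ * y, α x y s t⟩
        = Φ ⟨y, t⟩ * (Φ ⟨x, s⟩)⁻¹ * Φ ⟨y, t⟩ := by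
    intro x y s t
    simp [hΦdef, hαc, mul_assoc]
  -- (1) bijectivity of `s ↦ α x y s t`
  have hbij : ∀ (x y : G) (t : ↥π.ker),
      Function.Bijective (fun s : ↥π.ker => α x y s t) := by
    intro x y t
    have ht : π (t : E) = 1 := t.2
    have hmem : ∀ u : ↥π.ker,
        (σ x)⁻¹ * ((σ y * t) * (σ (y * x⁻¹ * y) * u)⁻¹ * (σ y * t)) ∈ π.ker := by
      intro u
      have hu : π (u : E) = 1 := u.2
      simp [MonoidHom.mem_ker, hσ, ht, hu]
    refine Function.bijective_iff_has_inverse.mpr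
      ⟨fun u => ⟨_, hmem u⟩, ?_, ?_⟩
    · intro s
      apply Subtype.ext
      simp only [hαc]
      group
    · intro u
      apply Subtype.ext
      simp only [hαc]
      group
  -- (2) the rack cocycle condition
  have hc2 : ∀ (x y z : G) (s t w : ↥π.ker),
      (⟨z * (y * x⁻¹ * y)⁻¹ * z, α (y * x⁻¹ * y) z (α x y s t) w⟩ : Σ _ : G, ↥π.ker)
        = ⟨(z * y⁻¹ * z) * (z * x⁻¹ * z)⁻¹ * (z * y⁻¹ * z),
            α (z * x⁻¹ * z) (z * y⁻¹ * z) (α x z s w) (α y z t w)⟩ := by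
    intro x y z s t w
    apply hΦinj
    rw [hΦα, hΦα, hΦα, hΦα, hΦα]
    group
  -- (5)
  have hc5 : ∀ (x y : G) (s t : ↥π.ker),
      (⟨y * (y * x⁻¹ * y)⁻¹ * y, α (y * x⁻¹ * y) y (α x y s t) t⟩ : Σ _ : G, ↥π.ker)
        = ⟨x, s⟩ := by
    intro x y s t
    apply hΦinj
    rw [hΦα, hΦα]
    group
  -- (6)
  have hc6 : ∀ (x : G) (s : ↥π.ker),
      (⟨x * x⁻¹ * x, α x x s s⟩ : Σ _ : G, ↥π.ker) = ⟨x, s⟩ := by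
    intro x s
    apply hΦinj
    rw [hΦα]
    group
  refine ⟨α, fun _ s => s,
    ⟨hbij, hc2, fun x y s t => rfl, fun x s => rfl, hc5⟩,
    hc6, Φ, ⟨hΦinj, hΦsurj⟩, ?_, fun p => rfl⟩
  rintro ⟨x, s⟩ ⟨y, t⟩
  exact hΦα x y s t
end

section
/- Let 1 → A → E →^π G → 1 be a short exact sequence of groups (so π: E → G is a surjective group homomorphism with kernel A), and let z ∈ A be a central element of E with z² = 1; set z̄ = π(z). Then there exists a dynamical cocycle (α,β) of the symmetric quandle (Core(G), ρ_{z̄}) over the constant family S_x = A such that (Core(E), ρ_z) is isomorphic to (Core(G), ρ_{z̄}) ×_{(α,β)} A as symmetric quandles, where ρ_z(y) = yz on Core(E) and ρ_{z̄}(y) = y·z̄ on Core(G). -/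
/-- given a short exact sequence `1 → A → E → G → 1` of groups and a
central element `z ∈ A` of `E` with `z² = 1`, setting `z̄ = π z`, there is a dynamical
cocycle `(α,β)` of the symmetric quandle `(Core(G), ρ_{z̄})` (operation `x*y = y x⁻¹ y`,
involution `y ↦ y z̄`) over the constant family `S_x = A = ker π`, such that
`(Core(E), ρ_z)` (involution `y ↦ y z`) is isomorphic to
`(Core(G), ρ_{z̄}) ×_{(α,β)} A` as symmetric quandles. -/
theorem statement10 {E G : Type*} [Group E] [Group G] (π : E →* G)
    (hπ : Function.Surjective π) (z : E)
    (hzA : z ∈ π.ker) (hzcentral : ∀ e : E, z * e = e * z) (hz2 : z * z = 1) :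
    ∃ (α : ∀ _ _ : G, ↥π.ker → ↥π.ker → ↥π.ker) (β : ∀ _ : G, ↥π.ker → ↥π.ker),
      DynCocycle (fun x y : G => y * x⁻¹ * y) (fun y : G => y * π z)
        (fun _ : G => ↥π.ker) α β ∧
      Cond6 (fun x y : G => y * x⁻¹ * y) (fun _ : G => ↥π.ker) α ∧
      ∃ Φ : (Σ _ : G, ↥π.ker) → E,
        Function.Bijective Φ ∧
        (∀ p q : Σ _ : G, ↥π.ker,
          Φ ⟨q.1 * p.1⁻¹ * q.1, α p.1 q.1 p.2 q.2⟩ = Φ q * (Φ p)⁻¹ * Φ q) ∧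
        (∀ p : Σ _ : G, ↥π.ker, Φ ⟨p.1 * π z, β p.1 p.2⟩ = Φ p * z) := by
  classical
  choose σ hσ using hπ
  have hπz : π z = 1 := hzA
  have hπk : ∀ s : ↥π.ker, π (s : E) = 1 := fun s => s.2
  have hzinv : z⁻¹ = z := by rw [inv_eq_of_mul_eq_one_right hz2]
  have key : ∀ a b : E, b * (a * z)⁻¹ * b = b * a⁻¹ * b * z := by
    intro a b
    rw [mul_inv_rev, hzinv]
    calc b * (z * a⁻¹) * b = b * (a⁻¹ * z) * b := by rw [hzcentral]
      _ = b * a⁻¹ * (z * b) := by group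
      _ = b * a⁻¹ * (b * z) := by rw [hzcentral]
      _ = b * a⁻¹ * b * z := by group
  have key2 : ∀ a b : E, (b * z) * a⁻¹ * (b * z) = b * a⁻¹ * b := by
    intro a b
    calc (b * z) * a⁻¹ * (b * z) = b * (z * a⁻¹) * (b * z) := by group
      _ = b * (a⁻¹ * z) * (b * z) := by rw [hzcentral]
      _ = b * a⁻¹ * ((z * b) * z) := by group
      _ = b * a⁻¹ * ((b * z) * z) := by rw [hzcentral]
      _ = b * a⁻¹ * (b * (z * z)) := by group
      _ = b * a⁻¹ * b := by rw [hz2, mul_one]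
  have hmemα : ∀ (x y : G) (s t : ↥π.ker),
      (σ (y * x⁻¹ * y))⁻¹ * ((σ y * t) * (σ x * s)⁻¹ * (σ y * t)) ∈ π.ker := by
    intro x y s t
    rw [MonoidHom.mem_ker]
    simp only [map_mul, map_inv, hσ, hπk, mul_one, one_mul, inv_one]
    group
  have hmemβ : ∀ (x : G) (s : ↥π.ker),
      (σ (x * π z))⁻¹ * ((σ x * s) * z) ∈ π.ker := by
    intro x s
    rw [MonoidHom.mem_ker]
    simp only [map_mul, map_inv, hσ, hπk, hπz, mul_one, one_mul, inv_one]
    group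
  set α : ∀ _ _ : G, ↥π.ker → ↥π.ker → ↥π.ker :=
    fun x y s t => ⟨_, hmemα x y s t⟩ with hα
  set β : ∀ _ : G, ↥π.ker → ↥π.ker := fun x s => ⟨_, hmemβ x s⟩ with hβ
  set Φ : (Σ _ : G, ↥π.ker) → E := fun p => σ p.1 * p.2 with hΦ
  have hΦbij : Function.Bijective Φ := by
    constructor
    · rintro ⟨x, s⟩ ⟨y, t⟩ h
      have hx : x = y := by
        have := congrArg π h
        simpa [hΦ, hσ, hπk] using this
      subst hx
      have : (s : E) = t := mul_left_cancel (h : σ x * s = σ x * t)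
      simp [Subtype.ext this]
    · intro e
      refine ⟨⟨π e, ⟨(σ (π e))⁻¹ * e, ?_⟩⟩, ?_⟩
      · rw [MonoidHom.mem_ker]
        simp [map_mul, map_inv, hσ]
      · simp [hΦ]
  have hop' : ∀ (x y : G) (s t : ↥π.ker),
      Φ ⟨y * x⁻¹ * y, α x y s t⟩ = Φ ⟨y, t⟩ * (Φ ⟨x, s⟩)⁻¹ * Φ ⟨y, t⟩ := by
    intro x y s t
    simp [hΦ, hα, mul_assoc]
  have hbe' : ∀ (x : G) (s : ↥π.ker),
      Φ ⟨x * π z, β x s⟩ = Φ ⟨x, s⟩ * z := by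
    intro x s
    simp [hΦ, hβ, mul_assoc]
  refine ⟨α, β, ⟨?_, ?_, ?_, ?_, ?_⟩, ?_, Φ, hΦbij, ?_, ?_⟩
  · -- (1) bijectivity of s ↦ α x y s t
    intro x y t
    have hmem : ∀ u : ↥π.ker,
        (σ x)⁻¹ * (σ y * t) * (u : E)⁻¹ * ((σ (y * x⁻¹ * y))⁻¹ * (σ y * t)) ∈ π.ker := by
      intro u
      rw [MonoidHom.mem_ker]
      simp only [map_mul, map_inv, hσ, hπk, mul_one, one_mul, inv_one]
      group
    refine Function.bijective_iff_has_inverse.2 ⟨fun u => ⟨_, hmem u⟩, ?_, ?_⟩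
    · intro s
      ext
      simp only [hα]
      group
    · intro u
      ext
      simp only [hα]
      group
  · -- (2)
    intro x y w s t v
    apply hΦbij.1
    rw [hop', hop', hop', hop', hop']
    group
  · -- (3)
    intro x y s t
    apply hΦbij.1
    rw [hop', hbe', hbe', hop']
    exact key _ _
  · -- (4)
    intro x s
    apply hΦbij.1
    rw [hbe', hbe', mul_assoc, hz2, mul_one]
  · -- (5)
    intro x y s t
    apply hΦbij.1
    rw [hop', hop', hbe', key2]
    group
  · -- (6)
    intro x s
    apply hΦbij.1
    rw [hop']
    group
  · intro p q
    exact hop' p.1 q.1 p.2 q.2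
  · intro p
    exact hbe' p.1 p.2
end
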